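/- Let q be a power of an odd prime with q ≡ 3 (mod 4). Any self-dual code C over GF(q) of length 2n with n even, n ≥ 4, is permutation-equivalent to a code obtained from some self-dual code C₀ over GF(q) of length 2n-4 by the building-up construction (i.e., by adjoining two rows (1,0,0,0|x₁), (0,1,0,0|x₂) and prepending vectors yᵢ = (-sᵢ,-tᵢ,-αsᵢ-βtᵢ,-βsᵢ+αtᵢ) to the rows of a generator matrix of C₀, where α²+β²+1=0, x₁·x₂=0 and xᵢ·xᵢ=-1). -/

import Mathlib

/-- The dual of a code (submodule) under the standard inner product. -/
def dualCode {R : Type*} [CommRing R] {N : ℕ} (C : Submodule R (Fin N → R)) :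
    Submodule R (Fin N → R) where
  carrier := {v | ∀ c ∈ C, ∑ i, v i * c i = 0}
  zero_mem' := by intro c hc; simp
  add_mem' := by
    intro a b ha hb c hc
    simpa [add_mul, Finset.sum_add_distrib] using by rw [ha c hc, hb c hc]; ring
  smul_mem' := by
    intro r a ha c hc
    simp only [Pi.smul_apply, smul_eq_mul, mul_assoc, ← Finset.mul_sum, Set.mem_setOf_eq]
    rw [ha c hc, mul_zero]

/-- Rows of the building-up generator matrix. -/
def buildG {R : Type*} [CommRing R] {n k : ℕ} (α β : R)
    (x₁ x₂ : Fin (2 * n) → R) (r : Fin k → Fin (2 * n) → R) :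
    (Fin 2 ⊕ Fin k) → Fin (4 + 2 * n) → R :=
  Sum.elim
    ![Fin.append ![1, 0, 0, 0] x₁, Fin.append ![0, 1, 0, 0] x₂]
    (fun i => Fin.append
      ![-(∑ j, x₁ j * r i j), -(∑ j, x₂ j * r i j),
        -α * (∑ j, x₁ j * r i j) - β * (∑ j, x₂ j * r i j),
        -β * (∑ j, x₁ j * r i j) + α * (∑ j, x₂ j * r i j)]
      (r i))

/-! ### Auxiliary material -/

open Module

lemma mem_dualCode {R : Type*} [CommRing R] {N : ℕ} {C : Submodule R (Fin N → R)}
    {v : Fin N → R} :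
    v ∈ dualCode C ↔ ∀ c ∈ C, ∑ i, v i * c i = 0 := Iff.rfl

section DualDim
variable {F : Type*} [Field F] {N : ℕ}

noncomputable def dotB : (Fin N → F) →ₗ[F] Module.Dual F (Fin N → F) :=
  LinearMap.mk₂ F (fun v c => ∑ i, v i * c i)
    (fun a b c => by simp [add_mul, Finset.sum_add_distrib])
    (fun r a c => by simp [Finset.mul_sum, mul_assoc])
    (fun a b c => by simp [mul_add, Finset.sum_add_distrib])
    (fun r a c => by
      simp [Finset.mul_sum]
      exact Finset.sum_congr rfl fun i _ => by ring)

lemma dotB_apply (v c : Fin N → F) : dotB v c = ∑ i, v i * c i := rfl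

lemma dotB_bijective : Function.Bijective (dotB (F := F) (N := N)) := by
  have hinj : Function.Injective (dotB (F := F) (N := N)) := by
    rw [injective_iff_map_eq_zero]
    intro v hv
    funext i
    have := congrArg (fun f => f (Pi.single i 1)) hv
    simpa [dotB_apply, Pi.single_apply, mul_ite, Finset.sum_ite_eq'] using this
  refine ⟨hinj, ?_⟩
  rwa [← LinearMap.injective_iff_surjective_of_finrank_eq_finrank
    (Subspace.dual_finrank_eq).symm]

noncomputable def dotEquiv : (Fin N → F) ≃ₗ[F] Module.Dual F (Fin N → F) :=
  LinearEquiv.ofBijective dotB dotB_bijective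

lemma dualCode_eq_comap (C : Submodule F (Fin N → F)) :
    dualCode C = (Submodule.dualAnnihilator C).comap (dotEquiv (F := F) (N := N)).toLinearMap := by
  ext v
  simp only [mem_dualCode, Submodule.mem_comap, Submodule.mem_dualAnnihilator]
  rfl

lemma finrank_dualCode_add (C : Submodule F (Fin N → F)) :
    Module.finrank F (dualCode C) + Module.finrank F C = N := by
  rw [dualCode_eq_comap, Submodule.comap_equiv_eq_map_symm,
    LinearEquiv.finrank_map_eq (dotEquiv (F := F) (N := N)).symm C.dualAnnihilator]
  have h1 : Module.finrank F ((Fin N → F) ⧸ C) = Module.finrank F C.dualAnnihilator :=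
    LinearEquiv.finrank_eq (Subspace.quotEquivAnnihilator C)
  have h2 := Submodule.finrank_quotient_add_finrank C
  have h3 : Module.finrank F (Fin N → F) = N := by simp
  omega
end DualDim

section UV
variable {F : Type*} [Field F] {N : ℕ}

lemma finrank_ker_ge {V : Type*} [AddCommGroup V] [Module F V] [FiniteDimensional F V]
    {k : ℕ} (f : V →ₗ[F] (Fin k → F)) :
    finrank F V ≤ finrank F (LinearMap.ker f) + k := by
  have h := LinearMap.finrank_range_add_finrank_ker f
  have h2 : finrank F (LinearMap.range f) ≤ k := by
    simpa using Submodule.finrank_le (LinearMap.range f)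
  omega

lemma rank_lemma {V V' : Type*} [AddCommGroup V] [Module F V] [FiniteDimensional F V]
    [AddCommGroup V'] [Module F V'] [FiniteDimensional F V'] {k : ℕ}
    (f : V →ₗ[F] (Fin k → F)) (g : V →ₗ[F] V') (C₀ : Submodule F V')
    (hmem : ∀ w, f w = 0 → g w ∈ C₀) (hinj : ∀ w, f w = 0 → g w = 0 → w = 0) :
    finrank F V ≤ finrank F C₀ + k := by
  let T : ↥(LinearMap.ker f) →ₗ[F] V' := g.comp (LinearMap.ker f).subtype
  have hTinj : Function.Injective T := by
    rw [← LinearMap.ker_eq_bot]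
    apply (Submodule.eq_bot_iff _).mpr
    intro w hw
    exact Subtype.ext (hinj (w : V) w.2 hw)
  have hTrange : LinearMap.range T ≤ C₀ := by
    rintro z ⟨w, rfl⟩
    exact hmem (w : V) w.2
  have h1 : finrank F ↥(LinearMap.range T) + finrank F ↥(LinearMap.ker T)
      = finrank F ↥(LinearMap.ker f) := LinearMap.finrank_range_add_finrank_ker T
  rw [LinearMap.ker_eq_bot.mpr hTinj, finrank_bot] at h1
  have h2 : finrank F ↥(LinearMap.range T) ≤ finrank F ↥C₀ :=
    Submodule.finrank_mono hTrange
  have h3 := finrank_ker_ge (F := F) f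
  omega

lemma exists_nonzero_of_finrank_pos {V : Type*} [AddCommGroup V] [Module F V]
    {W : Submodule F V} (h : 0 < finrank F W) : ∃ x ∈ W, x ≠ 0 := by
  by_contra hc
  push_neg at hc
  have : W = ⊥ := by
    ext x; simp only [Submodule.mem_bot]
    exact ⟨fun hx => hc x hx, fun hx => by simp [hx]⟩
  rw [this] at h; simp at h

lemma inj4 {α : Type*} {a b c d : α} (h1 : a ≠ b) (h2 : a ≠ c) (h3 : a ≠ d)
    (h4 : b ≠ c) (h5 : b ≠ d) (h6 : c ≠ d) : Function.Injective ![a, b, c, d] := by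
  intro i j hij
  fin_cases i <;> fin_cases j <;> simp_all

lemma exists_uv (C : Submodule F (Fin N → F)) (h4 : 4 ≤ finrank F C) :
    ∃ P : Fin 4 → Fin N, Function.Injective P ∧ ∃ u ∈ C, ∃ v ∈ C,
      u (P 0) = 1 ∧ u (P 1) = 0 ∧ u (P 2) = 0 ∧ u (P 3) = 0 ∧
      v (P 0) = 0 ∧ v (P 1) = 1 ∧ v (P 2) = 0 ∧ v (P 3) = 0 := by
  have hFD : FiniteDimensional F ↥C := inferInstance
  have hNC : finrank F C ≤ N := by
    simpa using Submodule.finrank_le C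
  have hN2 : 2 ≤ N := by omega
  set j₁ : Fin N := ⟨0, by omega⟩
  set j₂ : Fin N := ⟨1, by omega⟩
  have hj12 : j₁ ≠ j₂ := by simp [j₁, j₂, Fin.ext_iff]
  set Φ₂ : ↥C →ₗ[F] (Fin 2 → F) :=
    LinearMap.pi (fun i => (LinearMap.proj (![j₁, j₂] i)).comp C.subtype) with hΦ₂
  have hk2 : 0 < finrank F (LinearMap.ker Φ₂) := by
    have := finrank_ker_ge (F := F) Φ₂; omega
  obtain ⟨u₀, hu₀ker, hu₀ne⟩ := exists_nonzero_of_finrank_pos hk2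
  have hu₀j : ∀ i : Fin 2, (u₀ : Fin N → F) (![j₁, j₂] i) = 0 := by
    intro i
    have := congrFun (LinearMap.mem_ker.mp hu₀ker) i
    simpa [hΦ₂] using this
  have hu₀v : (u₀ : Fin N → F) ≠ 0 := by
    simpa using hu₀ne
  obtain ⟨p₁, hp₁⟩ := Function.ne_iff.mp hu₀v
  have hu₀1 : (u₀ : Fin N → F) j₁ = 0 := by simpa using hu₀j 0
  have hu₀2 : (u₀ : Fin N → F) j₂ = 0 := by simpa using hu₀j 1
  have hp₁1 : p₁ ≠ j₁ := fun h => hp₁ (by rw [h, hu₀1]; rfl)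
  have hp₁2 : p₁ ≠ j₂ := fun h => hp₁ (by rw [h, hu₀2]; rfl)
  set Φ₃ : ↥C →ₗ[F] (Fin 3 → F) :=
    LinearMap.pi (fun i => (LinearMap.proj (![j₁, j₂, p₁] i)).comp C.subtype) with hΦ₃
  have hk3 : 0 < finrank F (LinearMap.ker Φ₃) := by
    have := finrank_ker_ge (F := F) Φ₃; omega
  obtain ⟨v₀, hv₀ker, hv₀ne⟩ := exists_nonzero_of_finrank_pos hk3
  have hv₀j : ∀ i : Fin 3, (v₀ : Fin N → F) (![j₁, j₂, p₁] i) = 0 := by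
    intro i
    have := congrFun (LinearMap.mem_ker.mp hv₀ker) i
    simpa [hΦ₃] using this
  have hv₀1 : (v₀ : Fin N → F) j₁ = 0 := by simpa using hv₀j 0
  have hv₀2 : (v₀ : Fin N → F) j₂ = 0 := by simpa using hv₀j 1
  have hv₀3 : (v₀ : Fin N → F) p₁ = 0 := by simpa using hv₀j 2
  have hv₀v : (v₀ : Fin N → F) ≠ 0 := by simpa using hv₀ne
  obtain ⟨p₂, hp₂⟩ := Function.ne_iff.mp hv₀v
  have hp₂1 : p₂ ≠ j₁ := fun h => hp₂ (by rw [h, hv₀1]; rfl)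
  have hp₂2 : p₂ ≠ j₂ := fun h => hp₂ (by rw [h, hv₀2]; rfl)
  have hp₂3 : p₂ ≠ p₁ := fun h => hp₂ (by rw [h, hv₀3]; rfl)
  set v : Fin N → F := (((v₀ : Fin N → F) p₂)⁻¹) • (v₀ : Fin N → F) with hv
  have hvC : v ∈ C := C.smul_mem _ v₀.2
  have hvp₂ : v p₂ = 1 := by
    simp only [hv, Pi.smul_apply, smul_eq_mul]
    exact inv_mul_cancel₀ (by simpa using hp₂)
  have hvj₁ : v j₁ = 0 := by simp [hv, hv₀1]
  have hvj₂ : v j₂ = 0 := by simp [hv, hv₀2]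
  have hvp₁ : v p₁ = 0 := by simp [hv, hv₀3]
  set u₁ : Fin N → F := (((u₀ : Fin N → F) p₁)⁻¹) • (u₀ : Fin N → F) with hu₁
  set u : Fin N → F := u₁ - (u₁ p₂) • v with hu
  have huC : u ∈ C := C.sub_mem (C.smul_mem _ u₀.2) (C.smul_mem _ hvC)
  have hup₁ : u p₁ = 1 := by
    simp only [hu, hu₁, Pi.sub_apply, Pi.smul_apply, smul_eq_mul, hvp₁, mul_zero, sub_zero]
    exact inv_mul_cancel₀ (by simpa using hp₁)
  have hup₂ : u p₂ = 0 := by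
    simp [hu, hvp₂]
  have huj₁ : u j₁ = 0 := by simp [hu, hu₁, hu₀1, hvj₁]
  have huj₂ : u j₂ = 0 := by simp [hu, hu₁, hu₀2, hvj₂]
  refine ⟨![p₁, p₂, j₁, j₂], ?_, u, huC, v, hvC, ?_, ?_, ?_, ?_, ?_, ?_, ?_, ?_⟩
  · exact inj4 hp₂3.symm hp₁1 hp₁2 hp₂1 hp₂2 hj12
  all_goals simp [hup₁, hup₂, huj₁, huj₂, hvp₁, hvp₂, hvj₁, hvj₂]
end UV

open Module Classical in
lemma exists_equiv_extend {N M : ℕ} (hNM : N = 4 + M) (P : Fin 4 → Fin N)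
    (hP : Function.Injective P) :
    ∃ e : Fin N ≃ Fin (4 + M), ∀ i : Fin 4, e (P i) = Fin.castAdd M i := by
  classical
  set G : Fin 4 → Fin (4 + M) := fun i => Fin.castAdd M i with hG
  have hGinj : Function.Injective G := fun a b hab => by
    simpa [hG, Fin.ext_iff] using hab
  set S : Set (Fin N) := Set.range P with hS
  set T : Set (Fin (4 + M)) := Set.range G with hT
  have hcardS : Fintype.card S = 4 := Set.card_range_of_injective hP
  have hcardT : Fintype.card T = 4 := Set.card_range_of_injective hGinj
  have hcardc : Fintype.card (↥Sᶜ) = Fintype.card (↥Tᶜ) := by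
    rw [Fintype.card_compl_set, Fintype.card_compl_set, hcardS, hcardT]
    simp [hNM]
  set eS : ↥S ≃ ↥T := (Equiv.ofInjective P hP).symm.trans (Equiv.ofInjective G hGinj)
  set eC : ↥Sᶜ ≃ ↥Tᶜ := Fintype.equivOfCardEq hcardc
  refine ⟨(Equiv.Set.sumCompl S).symm.trans ((Equiv.sumCongr eS eC).trans
    (Equiv.Set.sumCompl T)), ?_⟩
  intro i
  have hmem : P i ∈ S := Set.mem_range_self i
  simp only [Equiv.trans_apply]
  rw [Equiv.Set.sumCompl_symm_apply_of_mem hmem]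
  simp only [Equiv.sumCongr_apply, Sum.map_inl, Equiv.Set.sumCompl_apply_inl]
  have : eS ⟨P i, hmem⟩ = ⟨G i, Set.mem_range_self i⟩ := by
    simp only [eS, Equiv.trans_apply]
    have h1 : (Equiv.ofInjective P hP).symm ⟨P i, hmem⟩ = i := by
      apply hP
      simpa using (Equiv.ofInjective P hP).apply_symm_apply ⟨P i, hmem⟩
    rw [h1]
    rfl
  rw [this]

lemma exists_alpha_beta {F : Type*} [Field F] [Fintype F]
    (h4 : Fintype.card F % 4 = 3) :
    ∃ α β : F, α ≠ 0 ∧ β ≠ 0 ∧ α ^ 2 + β ^ 2 + 1 = 0 := by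
  have hchar : ringChar F ≠ 0 := CharP.char_ne_zero_of_finite F (ringChar F)
  haveI : NeZero (ringChar F) := ⟨hchar⟩
  obtain ⟨a, b, hab⟩ := CharP.sq_add_sq F (ringChar F) (-1 : ℤ)
  have hab' : (a : F) ^ 2 + (b : F) ^ 2 = -1 := by push_cast at hab; exact hab
  have hnsq : ¬ IsSquare (-1 : F) := by
    rw [FiniteField.isSquare_neg_one_iff]
    simp [h4]
  refine ⟨a, b, ?_, ?_, by rw [hab']; ring⟩
  · intro h
    exact hnsq ⟨(b : F), by rw [← hab', h]; ring⟩
  · intro h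
    exact hnsq ⟨(a : F), by rw [← hab', h]; ring⟩

section Build
variable {F : Type*} [Field F] {m : ℕ} (α β : F) (x₁ x₂ : Fin (2 * m) → F)

def yvS (s t : F) : Fin 4 → F :=
  ![-s, -t, -α * s - β * t, -β * s + α * t]

lemma yvS_add (s t s' t' : F) :
    yvS α β (s + s') (t + t') = yvS α β s t + yvS α β s' t' := by
  funext i
  fin_cases i <;> simp [yvS] <;> ring

lemma yvS_smul (c s t : F) :
    yvS α β (c * s) (c * t) = c • yvS α β s t := by
  funext i
  fin_cases i <;> simp [yvS] <;> ring

lemma quadSum (s t s' t' : F) :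
    ∑ i : Fin 4, yvS α β s t i * yvS α β s' t' i
      = (α ^ 2 + β ^ 2 + 1) * (s * s' + t * t') := by
  simp [Fin.sum_univ_four, yvS]
  ring

def yv (z : Fin (2 * m) → F) : Fin 4 → F :=
  yvS α β (∑ j, x₁ j * z j) (∑ j, x₂ j * z j)

lemma append_add {a b : ℕ} (u u' : Fin a → F) (v v' : Fin b → F) :
    Fin.append (u + u') (v + v') = Fin.append u v + Fin.append u' v' := by
  funext i
  induction i using Fin.addCases with
  | left i => simp [Fin.append_left]
  | right j => simp [Fin.append_right]

lemma append_smul {a b : ℕ} (c : F) (u : Fin a → F) (v : Fin b → F) :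
    Fin.append (c • u) (c • v) = c • Fin.append u v := by
  funext i
  induction i using Fin.addCases with
  | left i => simp [Fin.append_left]
  | right j => simp [Fin.append_right]

lemma dot_add (x z z' : Fin (2 * m) → F) :
    ∑ j, x j * (z + z') j = (∑ j, x j * z j) + ∑ j, x j * z' j := by
  rw [← Finset.sum_add_distrib]
  exact Finset.sum_congr rfl fun j _ => by simp [mul_add]

lemma dot_smul (x z : Fin (2 * m) → F) (c : F) :
    ∑ j, x j * (c • z) j = c * ∑ j, x j * z j := by
  rw [Finset.mul_sum]
  exact Finset.sum_congr rfl fun j _ => by simp; ring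

lemma yv_add (z z' : Fin (2 * m) → F) :
    yv α β x₁ x₂ (z + z') = yv α β x₁ x₂ z + yv α β x₁ x₂ z' := by
  rw [yv, dot_add, dot_add, yvS_add]; rfl

lemma yv_smul (c : F) (z : Fin (2 * m) → F) :
    yv α β x₁ x₂ (c • z) = c • yv α β x₁ x₂ z := by
  rw [yv, dot_smul, dot_smul, yvS_smul]; rfl

def Jmap : (Fin (2 * m) → F) →ₗ[F] (Fin (4 + 2 * m) → F) where
  toFun z := Fin.append (yv α β x₁ x₂ z) z
  map_add' z z' := by rw [yv_add, ← append_add]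
  map_smul' c z := by rw [RingHom.id_apply, yv_smul, ← append_smul]

lemma Jmap_apply (z : Fin (2 * m) → F) :
    Jmap α β x₁ x₂ z = Fin.append (yv α β x₁ x₂ z) z := rfl

lemma buildG_inr (r : Fin (m) → Fin (2 * m) → F) (i : Fin m) :
    buildG α β x₁ x₂ r (Sum.inr i) = Jmap α β x₁ x₂ (r i) := rfl

def Lmap : (Fin (4 + 2 * m) → F) →ₗ[F] (Fin 2 → F) where
  toFun w := ![w (Fin.castAdd (2 * m) 2) - α * w (Fin.castAdd (2 * m) 0)
                - β * w (Fin.castAdd (2 * m) 1),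
               w (Fin.castAdd (2 * m) 3) - β * w (Fin.castAdd (2 * m) 0)
                + α * w (Fin.castAdd (2 * m) 1)]
  map_add' w w' := by
    funext j; fin_cases j <;> simp <;> ring
  map_smul' c w := by
    funext j; fin_cases j <;> simp <;> ring

lemma Lmap_apply (w : Fin (4 + 2 * m) → F) :
    Lmap α β w = ![w (Fin.castAdd (2 * m) 2) - α * w (Fin.castAdd (2 * m) 0)
                - β * w (Fin.castAdd (2 * m) 1),
               w (Fin.castAdd (2 * m) 3) - β * w (Fin.castAdd (2 * m) 0)
                + α * w (Fin.castAdd (2 * m) 1)] := rfl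

def tailL : (Fin (4 + 2 * m) → F) →ₗ[F] (Fin (2 * m) → F) :=
  LinearMap.funLeft F F (Fin.natAdd 4)

lemma tailL_apply (w : Fin (4 + 2 * m) → F) (j : Fin (2 * m)) :
    tailL (F := F) (m := m) w j = w (Fin.natAdd 4 j) := rfl

lemma dot_append_left (a : Fin 4 → F) (b : Fin (2 * m) → F) (w : Fin (4 + 2 * m) → F) :
    ∑ i, w i * (Fin.append a b) i
      = ∑ i : Fin 4, w (Fin.castAdd (2 * m) i) * a i
        + ∑ j, w (Fin.natAdd 4 j) * b j := by
  rw [Fin.sum_univ_add]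
  simp [Fin.append_left, Fin.append_right]

lemma dot_append_append (a a' : Fin 4 → F) (b b' : Fin (2 * m) → F) :
    ∑ i, (Fin.append a b) i * (Fin.append a' b') i
      = ∑ i : Fin 4, a i * a' i + ∑ j, b j * b' j := by
  rw [Fin.sum_univ_add]
  simp [Fin.append_left, Fin.append_right]

/-- If a vector satisfies the two dot conditions and is killed by `Lmap`, it equals
`Jmap` of its tail. -/
lemma eq_Jmap_tail (w : Fin (4 + 2 * m) → F)
    (h1 : ∑ j, x₁ j * w (Fin.natAdd 4 j) = -(w (Fin.castAdd (2 * m) 0)))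
    (h2 : ∑ j, x₂ j * w (Fin.natAdd 4 j) = -(w (Fin.castAdd (2 * m) 1)))
    (hL : Lmap α β w = 0) :
    Jmap α β x₁ x₂ (tailL w) = w := by
  have hL0 := congrFun hL 0
  have hL1 := congrFun hL 1
  simp only [Lmap, LinearMap.coe_mk, AddHom.coe_mk, Matrix.cons_val_zero,
    Matrix.cons_val_one, Matrix.head_cons, Pi.zero_apply] at hL0 hL1
  have ht1 : ∑ j, x₁ j * tailL (F := F) (m := m) w j = -(w (Fin.castAdd (2 * m) 0)) := h1
  have ht2 : ∑ j, x₂ j * tailL (F := F) (m := m) w j = -(w (Fin.castAdd (2 * m) 1)) := h2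
  funext i
  induction i using Fin.addCases with
  | left i =>
    rw [Jmap_apply, Fin.append_left]
    fin_cases i
    · show yvS α β (∑ j, x₁ j * tailL w j) (∑ j, x₂ j * tailL w j) 0
        = w (Fin.castAdd (2 * m) 0)
      rw [ht1, ht2]
      simp [yvS]
    · show yvS α β (∑ j, x₁ j * tailL w j) (∑ j, x₂ j * tailL w j) 1
        = w (Fin.castAdd (2 * m) 1)
      rw [ht1, ht2]
      simp [yvS]
    · show yvS α β (∑ j, x₁ j * tailL w j) (∑ j, x₂ j * tailL w j) 2
        = w (Fin.castAdd (2 * m) 2)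
      rw [ht1, ht2]
      show -α * -w (Fin.castAdd (2 * m) 0) - β * -w (Fin.castAdd (2 * m) 1)
        = w (Fin.castAdd (2 * m) 2)
      linear_combination -hL0
    · show yvS α β (∑ j, x₁ j * tailL w j) (∑ j, x₂ j * tailL w j) 3
        = w (Fin.castAdd (2 * m) 3)
      rw [ht1, ht2]
      show -β * -w (Fin.castAdd (2 * m) 0) + α * -w (Fin.castAdd (2 * m) 1)
        = w (Fin.castAdd (2 * m) 3)
      linear_combination -hL1
  | right j =>
    rw [Jmap_apply, Fin.append_right]
    rfl
end Build
set_option maxHeartbeats 1000000 in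
set_option synthInstance.maxHeartbeats 400000 in
/-- every self-dual code over `GF(q)`, `q ≡ 3 (mod 4)`, of length `2n`
(`n` even, `n ≥ 4`) is permutation-equivalent to one obtained from a self-dual code of
length `2n - 4` by the building-up construction. -/
theorem stmt3 {F : Type*} [Field F] [Fintype F] (p k : ℕ) (hp : p.Prime) (hpodd : Odd p)
    (hcard : Fintype.card F = p ^ k) (h4 : Fintype.card F % 4 = 3)
    (n : ℕ) (hn : Even n) (hn4 : 4 ≤ n)
    (C : Submodule F (Fin (2 * n) → F)) (hsd : C = dualCode C) :
    ∃ (α β : F) (_ : α ≠ 0) (_ : β ≠ 0) (_ : α ^ 2 + β ^ 2 + 1 = 0)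
      (r : Fin (n - 2) → Fin (2 * (n - 2)) → F)
      (C₀ : Submodule F (Fin (2 * (n - 2)) → F))
      (_ : C₀ = Submodule.span F (Set.range r)) (_ : C₀ = dualCode C₀)
      (x₁ x₂ : Fin (2 * (n - 2)) → F)
      (_ : ∑ j, x₁ j * x₂ j = 0)
      (_ : ∑ j, x₁ j * x₁ j = -1) (_ : ∑ j, x₂ j * x₂ j = -1)
      (e : Fin (2 * n) ≃ Fin (4 + 2 * (n - 2))),
      C = Submodule.map (LinearEquiv.funCongrLeft F F e).toLinearMap
            (Submodule.span F (Set.range (buildG α β x₁ x₂ r))) := by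
  obtain ⟨α, β, hα, hβ, hαβ⟩ := exists_alpha_beta h4
  set m := n - 2 with hmdef
  have hmn : 2 * n = 4 + 2 * m := by omega
  -- the dimension of C
  have hfr : finrank F C = n := by
    have h := finrank_dualCode_add C
    rw [← hsd] at h; omega
  obtain ⟨P, hPinj, u, huC, v, hvC, hu0, hu1, hu2, hu3, hv0, hv1, hv2, hv3⟩ :=
    exists_uv C (by omega)
  obtain ⟨e, he⟩ := exists_equiv_extend hmn P hPinj
  have hPe : ∀ i : Fin 4, P i = e.symm (Fin.castAdd (2 * m) i) :=
    fun i => (Equiv.eq_symm_apply e).mpr (he i)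
  set E := LinearEquiv.funCongrLeft F F e.symm with hE
  set D := Submodule.map E.toLinearMap C with hDdef
  have hEsymm : ∀ w : Fin (4 + 2 * m) → F, E.symm w = w ∘ e := by
    intro w
    rw [hE, LinearEquiv.funCongrLeft_symm]
    rfl
  have hmemD : ∀ w, w ∈ D ↔ (w ∘ e) ∈ C := by
    intro w
    rw [hDdef, Submodule.mem_map_equiv, hEsymm]
  have hsum : ∀ w d : Fin (4 + 2 * m) → F,
      ∑ i, w i * d i = ∑ j, w (e j) * d (e j) :=
    fun w d => (Equiv.sum_comp e (fun i => w i * d i)).symm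
  have hDdual : D = dualCode D := by
    ext w
    rw [hmemD]
    constructor
    · intro hw
      rw [mem_dualCode]
      intro d hd
      rw [hmemD] at hd
      rw [hsum]
      have : w ∘ e ∈ dualCode C := hsd ▸ hw
      exact this (d ∘ e) hd
    · intro hw
      rw [hsd, mem_dualCode]
      intro c hc
      have hcd : (c ∘ e.symm) ∈ D := by
        rw [hmemD]
        have : (c ∘ e.symm) ∘ e = c := funext fun j => by simp
        rwa [this]
      have := hw (c ∘ e.symm) hcd
      rw [hsum] at this
      simpa using this
  have hdu : ∀ w ∈ D, ∀ d ∈ D, ∑ i, w i * d i = 0 := by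
    intro w hw d hd
    rw [hDdual] at hw
    exact hw d hd
  have hfrD : finrank F ↥D = n := by
    rw [hDdef, LinearEquiv.finrank_map_eq E C]; exact hfr
  -- the two distinguished vectors, moved along e
  set u' : Fin (4 + 2 * m) → F := u ∘ e.symm with hu'def
  set v' : Fin (4 + 2 * m) → F := v ∘ e.symm with hv'def
  set x₁ : Fin (2 * m) → F := fun j => u (e.symm (Fin.natAdd 4 j)) with hx₁def
  set x₂ : Fin (2 * m) → F := fun j => v (e.symm (Fin.natAdd 4 j)) with hx₂def
  have hu'D : u' ∈ D := by
    rw [hmemD]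
    have : u' ∘ e = u := funext fun j => by simp [hu'def]
    rwa [this]
  have hv'D : v' ∈ D := by
    rw [hmemD]
    have : v' ∘ e = v := funext fun j => by simp [hv'def]
    rwa [this]
  have hu'app : u' = Fin.append ![1, 0, 0, 0] x₁ := by
    funext i
    induction i using Fin.addCases with
    | left i =>
      rw [Fin.append_left]
      fin_cases i
      · show u' (Fin.castAdd (2 * m) 0) = 1
        rw [hu'def, Function.comp_apply, ← hPe 0]; exact hu0
      · show u' (Fin.castAdd (2 * m) 1) = 0
        rw [hu'def, Function.comp_apply, ← hPe 1]; exact hu1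
      · show u' (Fin.castAdd (2 * m) 2) = 0
        rw [hu'def, Function.comp_apply, ← hPe 2]; exact hu2
      · show u' (Fin.castAdd (2 * m) 3) = 0
        rw [hu'def, Function.comp_apply, ← hPe 3]; exact hu3
    | right j =>
      rw [Fin.append_right]
      rfl
  have hv'app : v' = Fin.append ![0, 1, 0, 0] x₂ := by
    funext i
    induction i using Fin.addCases with
    | left i =>
      rw [Fin.append_left]
      fin_cases i
      · show v' (Fin.castAdd (2 * m) 0) = 0
        rw [hv'def, Function.comp_apply, ← hPe 0]; exact hv0
      · show v' (Fin.castAdd (2 * m) 1) = 1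
        rw [hv'def, Function.comp_apply, ← hPe 1]; exact hv1
      · show v' (Fin.castAdd (2 * m) 2) = 0
        rw [hv'def, Function.comp_apply, ← hPe 2]; exact hv2
      · show v' (Fin.castAdd (2 * m) 3) = 0
        rw [hv'def, Function.comp_apply, ← hPe 3]; exact hv3
    | right j =>
      rw [Fin.append_right]
      rfl
  -- inner products of x₁ and x₂
  have h11 : ∑ j, x₁ j * x₁ j = -1 := by
    have h := hdu u' hu'D u' hu'D
    rw [hu'app, dot_append_append] at h
    have h4s : ∑ i : Fin 4, (![1, 0, 0, 0] : Fin 4 → F) i * ![1, 0, 0, 0] i = 1 := by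
      simp [Fin.sum_univ_four]
    rw [h4s] at h
    linear_combination h
  have h22 : ∑ j, x₂ j * x₂ j = -1 := by
    have h := hdu v' hv'D v' hv'D
    rw [hv'app, dot_append_append] at h
    have h4s : ∑ i : Fin 4, (![0, 1, 0, 0] : Fin 4 → F) i * ![0, 1, 0, 0] i = 1 := by
      simp [Fin.sum_univ_four]
    rw [h4s] at h
    linear_combination h
  have h12 : ∑ j, x₁ j * x₂ j = 0 := by
    have h := hdu u' hu'D v' hv'D
    rw [hu'app, hv'app, dot_append_append] at h
    have h4s : ∑ i : Fin 4, (![1, 0, 0, 0] : Fin 4 → F) i * ![0, 1, 0, 0] i = 0 := by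
      simp [Fin.sum_univ_four]
    rw [h4s] at h
    linear_combination h
  -- the smaller code
  set C₀ : Submodule F (Fin (2 * m) → F) := Submodule.comap (Jmap α β x₁ x₂) D with hC₀def
  have hJmem : ∀ z, z ∈ C₀ ↔ Jmap α β x₁ x₂ z ∈ D := fun z => Submodule.mem_comap
  -- dot products against u' v' for elements of D, plus Lmap kill, give Jmap-of-tail
  have hJtail : ∀ w, w ∈ D → Lmap α β w = 0 → Jmap α β x₁ x₂ (tailL w) = w := by
    intro w hw hL
    apply eq_Jmap_tail
    · have h := hdu w hw u' hu'D
      rw [hu'app, dot_append_left] at h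
      have h4s : ∑ i : Fin 4, w (Fin.castAdd (2 * m) i) * (![1, 0, 0, 0] : Fin 4 → F) i
          = w (Fin.castAdd (2 * m) 0) := by
        simp [Fin.sum_univ_four]
      rw [h4s] at h
      have hflip : ∑ j, x₁ j * w (Fin.natAdd 4 j) = ∑ j, w (Fin.natAdd 4 j) * x₁ j :=
        Finset.sum_congr rfl fun j _ => mul_comm _ _
      rw [hflip]; linear_combination h
    · have h := hdu w hw v' hv'D
      rw [hv'app, dot_append_left] at h
      have h4s : ∑ i : Fin 4, w (Fin.castAdd (2 * m) i) * (![0, 1, 0, 0] : Fin 4 → F) i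
          = w (Fin.castAdd (2 * m) 1) := by
        simp [Fin.sum_univ_four]
      rw [h4s] at h
      have hflip : ∑ j, x₂ j * w (Fin.natAdd 4 j) = ∑ j, w (Fin.natAdd 4 j) * x₂ j :=
        Finset.sum_congr rfl fun j _ => mul_comm _ _
      rw [hflip]; linear_combination h
    · exact hL
  -- C₀ is self-orthogonal
  have hC₀le : C₀ ≤ dualCode C₀ := by
    intro z hz
    rw [mem_dualCode]
    intro c hc
    have h := hdu _ ((hJmem z).mp hz) _ ((hJmem c).mp hc)
    rw [Jmap_apply, Jmap_apply, dot_append_append] at h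
    have hq : ∑ i : Fin 4, yv α β x₁ x₂ z i * yv α β x₁ x₂ c i
        = (α ^ 2 + β ^ 2 + 1) *
          ((∑ j, x₁ j * z j) * (∑ j, x₁ j * c j) + (∑ j, x₂ j * z j) * (∑ j, x₂ j * c j)) := by
      simp only [yv]
      rw [quadSum]
    rw [hq, hαβ, zero_mul, zero_add] at h
    exact h
  -- lower bound on the rank of C₀
  have hlow : m ≤ finrank F ↥C₀ := by
    have hkey := rank_lemma ((Lmap α β (m := m)).comp D.subtype)
      ((tailL (F := F) (m := m)).comp D.subtype) C₀
      (fun w h0 => by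
        have h0' : Lmap α β ((w : Fin (4 + 2 * m) → F)) = 0 := h0
        have hJ := hJtail _ w.2 h0'
        refine (hJmem _).mpr ?_
        show Jmap α β x₁ x₂ (tailL (F := F) (m := m) ((w : Fin (4 + 2 * m) → F))) ∈ D
        rw [hJ]; exact w.2)
      (fun w h0 hg => by
        have h0' : Lmap α β ((w : Fin (4 + 2 * m) → F)) = 0 := h0
        have hg' : tailL (F := F) (m := m) ((w : Fin (4 + 2 * m) → F)) = 0 := hg
        have hJ := hJtail _ w.2 h0'
        rw [hg', map_zero] at hJ
        exact Subtype.ext hJ.symm)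
    rw [hfrD] at hkey
    omega
  -- C₀ is self-dual
  have hdual₀ := finrank_dualCode_add C₀
  have hupb : finrank F ↥C₀ ≤ finrank F ↥(dualCode C₀) := Submodule.finrank_mono hC₀le
  have hfrC₀ : finrank F ↥C₀ = m := by omega
  have hC₀dual : C₀ = dualCode C₀ :=
    Submodule.eq_of_le_of_finrank_eq hC₀le (by omega)
  -- a spanning family for C₀
  have hfin : FiniteDimensional F ↥C₀ := inferInstance
  set bas := Module.finBasis F ↥C₀ with hbas
  set r : Fin m → (Fin (2 * m) → F) :=
    fun i => ((bas (Fin.cast (by rw [hfrC₀]) i)) : Fin (2 * m) → F) with hrdef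
  have hrmem : ∀ i, r i ∈ C₀ := fun i => (bas _).2
  have hspan : C₀ = Submodule.span F (Set.range r) := by
    have hr : Set.range r = ⇑C₀.subtype '' Set.range ⇑bas := by
      ext z
      constructor
      · rintro ⟨i, rfl⟩
        exact ⟨bas (Fin.cast (by rw [hfrC₀]) i), ⟨_, rfl⟩, rfl⟩
      · rintro ⟨w, ⟨i, rfl⟩, rfl⟩
        exact ⟨Fin.cast (by rw [hfrC₀]) i, by simp [hrdef]⟩
    rw [hr, ← Submodule.map_span, Basis.span_eq, Submodule.map_subtype_top]
  -- span of the building-up rows equals D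
  have hspanD : Submodule.span F (Set.range (buildG α β x₁ x₂ r)) = D := by
    apply le_antisymm
    · rw [Submodule.span_le]
      rintro g ⟨i, rfl⟩
      rcases i with i | i
      · fin_cases i
        · have : buildG α β x₁ x₂ r (Sum.inl 0) = u' := by
            rw [hu'app]; rfl
          rw [show (Sum.inl (⟨0, by omega⟩ : Fin 2) : Fin 2 ⊕ Fin m) = Sum.inl 0 from rfl,
            this]
          exact hu'D
        · have : buildG α β x₁ x₂ r (Sum.inl 1) = v' := by
            rw [hv'app]; rfl
          rw [show (Sum.inl (⟨1, by omega⟩ : Fin 2) : Fin 2 ⊕ Fin m) = Sum.inl 1 from rfl,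
            this]
          exact hv'D
      · rw [buildG_inr]
        exact SetLike.mem_coe.mpr ((hJmem (r i)).mp (hrmem i))
    · intro w hw
      set c₁ : F := w (Fin.castAdd (2 * m) 2) - α * w (Fin.castAdd (2 * m) 0)
        - β * w (Fin.castAdd (2 * m) 1) with hc₁
      set c₂ : F := w (Fin.castAdd (2 * m) 3) - β * w (Fin.castAdd (2 * m) 0)
        + α * w (Fin.castAdd (2 * m) 1) with hc₂
      set a : F := α * c₁ + β * c₂ with ha
      set b : F := β * c₁ - α * c₂ with hb
      set w' := w - a • u' - b • v' with hw'
      have hw'D : w' ∈ D := D.sub_mem (D.sub_mem hw (D.smul_mem _ hu'D)) (D.smul_mem _ hv'D)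
      have hu'c : ∀ i : Fin 4, u' (Fin.castAdd (2 * m) i) = ![1, 0, 0, 0] i := by
        intro i; rw [hu'app, Fin.append_left]
      have hv'c : ∀ i : Fin 4, v' (Fin.castAdd (2 * m) i) = ![0, 1, 0, 0] i := by
        intro i; rw [hv'app, Fin.append_left]
      have hLw' : Lmap α β w' = 0 := by
        funext j
        fin_cases j
        · show w' (Fin.castAdd (2 * m) 2) - α * w' (Fin.castAdd (2 * m) 0)
            - β * w' (Fin.castAdd (2 * m) 1) = 0
          simp only [hw', Pi.sub_apply, Pi.smul_apply, smul_eq_mul,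
            hu'c 0, hu'c 1, hu'c 2, hv'c 0, hv'c 1, hv'c 2]
          simp only [Matrix.cons_val_zero, Matrix.cons_val_one, Matrix.head_cons,
            Matrix.cons_val_two, Matrix.tail_cons]
          linear_combination (w (Fin.castAdd (2 * m) 2) - α * w (Fin.castAdd (2 * m) 0)
            - β * w (Fin.castAdd (2 * m) 1)) * hαβ
        · show w' (Fin.castAdd (2 * m) 3) - β * w' (Fin.castAdd (2 * m) 0)
            + α * w' (Fin.castAdd (2 * m) 1) = 0
          simp only [hw', Pi.sub_apply, Pi.smul_apply, smul_eq_mul,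
            hu'c 0, hu'c 1, hu'c 3, hv'c 0, hv'c 1, hv'c 3]
          simp only [Matrix.cons_val_zero, Matrix.cons_val_one, Matrix.head_cons,
            Matrix.cons_val_three, Matrix.tail_cons]
          linear_combination (w (Fin.castAdd (2 * m) 3) - β * w (Fin.castAdd (2 * m) 0)
            + α * w (Fin.castAdd (2 * m) 1)) * hαβ
      have hJw' : Jmap α β x₁ x₂ (tailL w') = w' := hJtail _ hw'D hLw'
      have htail : tailL (F := F) (m := m) w' ∈ C₀ := by
        rw [hJmem, hJw']
        exact hw'D
      have hw'span : w' ∈ Submodule.span F (Set.range (buildG α β x₁ x₂ r)) := by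
        rw [← hJw']
        rw [hspan] at htail
        have h1 : Jmap α β x₁ x₂ (tailL w')
            ∈ Submodule.map (Jmap α β x₁ x₂) (Submodule.span F (Set.range r)) :=
          Submodule.mem_map_of_mem htail
        rw [Submodule.map_span] at h1
        refine Submodule.span_mono ?_ h1
        rintro g ⟨z, ⟨i, rfl⟩, rfl⟩
        exact ⟨Sum.inr i, (buildG_inr α β x₁ x₂ r i).symm⟩
      have hu'span : u' ∈ Submodule.span F (Set.range (buildG α β x₁ x₂ r)) := by
        apply Submodule.subset_span
        refine ⟨Sum.inl 0, ?_⟩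
        rw [hu'app]; rfl
      have hv'span : v' ∈ Submodule.span F (Set.range (buildG α β x₁ x₂ r)) := by
        apply Submodule.subset_span
        refine ⟨Sum.inl 1, ?_⟩
        rw [hv'app]; rfl
      have : w = w' + a • u' + b • v' := by
        rw [hw']; abel
      rw [this]
      exact Submodule.add_mem _ (Submodule.add_mem _ hw'span
        (Submodule.smul_mem _ _ hu'span)) (Submodule.smul_mem _ _ hv'span)
  -- conclusion
  refine ⟨α, β, hα, hβ, hαβ, r, C₀, hspan, hC₀dual, x₁, x₂, h12, h11, h22, e, ?_⟩
  rw [hspanD, hDdef, ← Submodule.map_comp]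
  have hid : ((LinearEquiv.funCongrLeft F F e).toLinearMap.comp E.toLinearMap) =
      LinearMap.id := by
    apply LinearMap.ext
    intro f
    funext i
    simp [hE, LinearEquiv.funCongrLeft_apply, LinearMap.funLeft_apply]
  rw [hid, Submodule.map_id]
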